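/- Let m ≥ 2, ℓ ≥ 2, and let C_* be the quotient of OP_*(ℓ,m) by the image of φ(a₁,...,a_k) = (1,m-1,a₁,...,a_k). Then the map s: C_* → C_{*+1} given by s(a₁,...,a_k) = 0 if a₁=1, and s(a₁,...,a_k) = −(1, a₁−1, a₂,...,a_k) if a₁>1, satisfies sd + ds = Id; hence C_* is acyclic and φ is a quasi-isomorphism. -/

import Mathlib

/-!
We compute in the free module on all lists of naturals, where `d` and the homotopy `s` are given
by the list formulas `dList` and `sList`: `OP_k(ℓ,m)` is the span of the valid lists, both maps
preserve validity, and identities proved on lists descend.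

On a valid list `(a, b, …)` the sum `d s + s d` returns the list itself up to one term: when
`a + b = m`, `d s` produces `(1, m-1, …)`, which `s d` cannot cancel because `d` drops the merge
`(a + b, …)`. That term lies in the image of `φ`, so `d s + s d = id` on `C_*`. As `s` vanishes on
lists starting with `1`, it also kills `im φ`; together with `φ` being an injective chain map this
gives acyclicity of `C_*` and that `φ` is a quasi-isomorphism.
-/

open scoped Classical

/-- Basis of `OP_k(ℓ,m)`: ordered partitions of `ℓ` into `k` parts, all in `{1,...,m-1}`. -/
def OPb (ℓ : ℤ) (m k : ℕ) : Type :=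
  {l : List ℕ // l.length = k ∧ (l.sum : ℤ) = ℓ ∧ ∀ x ∈ l, 1 ≤ x ∧ x < m}

/-- The degree-`k` chain module of the complex of ordered partitions with upper bound. -/
abbrev OPMod (R : Type) [CommRing R] (ℓ : ℤ) (m k : ℕ) := OPb ℓ m k →₀ R

/-- The alternating sum of adjacent merges of a list, dropping merged entries `≥ m`. -/
noncomputable def dList (R : Type) [CommRing R] (m : ℕ) : List ℕ → (List ℕ →₀ R)
  | [] => 0
  | [_] => 0
  | a :: b :: t =>
      (if a + b < m then -Finsupp.single ((a + b) :: t) (1 : R) else 0)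
        - Finsupp.mapDomain (List.cons a) (dList R m (b :: t))

/-- Embedding of `OP_k(ℓ,m)` into the free module on all lists. -/
noncomputable def eL (R : Type) [CommRing R] (ℓ : ℤ) (m k : ℕ) :
    OPMod R ℓ m k →ₗ[R] (List ℕ →₀ R) :=
  Finsupp.lmapDomain R R Subtype.val

noncomputable def DL (R : Type) [CommRing R] (m : ℕ) : (List ℕ →₀ R) →ₗ[R] (List ℕ →₀ R) :=
  Finsupp.lsum R fun l => LinearMap.toSpanSingleton R _ (dList R m l)

noncomputable def rL (R : Type) [CommRing R] (ℓ : ℤ) (m k : ℕ) :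
    (List ℕ →₀ R) →ₗ[R] OPMod R ℓ m k :=
  Finsupp.lcomapDomain Subtype.val Subtype.val_injective

/-- The differential of the complex `OP_*(ℓ,m)`: merge adjacent entries with alternating
signs `(-1)^i`, dropping any term in which the merged entry is `≥ m`. -/
noncomputable def dOP (R : Type) [CommRing R] (ℓ : ℤ) (m k : ℕ) :
    OPMod R ℓ m (k + 1) →ₗ[R] OPMod R ℓ m k :=
  (rL R ℓ m k) ∘ₗ (DL R m) ∘ₗ (eL R ℓ m (k + 1))

/-- The outgoing differential from degree `k` (zero in degree `0`). -/
noncomputable def dOPOut (R : Type) [CommRing R] (ℓ : ℤ) (m : ℕ) :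
    (k : ℕ) → OPMod R ℓ m k →ₗ[R] OPMod R ℓ m (k - 1)
  | 0 => 0
  | (k + 1) => dOP R ℓ m k

/-- Homology of the complex `OP_*(ℓ,m)` in degree `k`. -/
noncomputable abbrev OPH (R : Type) [CommRing R] (ℓ : ℤ) (m k : ℕ) :=
  letI : HasQuotient (LinearMap.ker (dOPOut R ℓ m k))
      (Submodule R (LinearMap.ker (dOPOut R ℓ m k))) :=
    @Submodule.hasQuotient R (LinearMap.ker (dOPOut R ℓ m k)) _ (Submodule.addCommGroup _) _
  LinearMap.ker (dOPOut R ℓ m k) ⧸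
    (LinearMap.range (dOPOut R ℓ m (k + 1))).comap (LinearMap.ker (dOPOut R ℓ m k)).subtype

/-- The chain map `φ : OP_{*-2}(ℓ-m,m) → OP_*(ℓ,m)`, prepending `(1, m-1)`. -/
noncomputable def phiOP (R : Type) [CommRing R] (ℓ : ℤ) (m : ℕ) (hm : 2 ≤ m) (k : ℕ) :
    OPMod R (ℓ - m) m k →ₗ[R] OPMod R ℓ m (k + 2) :=
  Finsupp.lmapDomain R R fun b =>
    ⟨1 :: (m - 1) :: b.1, by
      obtain ⟨h1, h2, h3⟩ := b.2
      refine ⟨by simpa using h1, ?_, ?_⟩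
      · simp only [List.sum_cons]
        omega
      · intro y hy
        simp only [List.mem_cons] at hy
        rcases hy with rfl | rfl | hy
        · omega
        · omega
        · exact h3 y hy⟩

/-- The alternating list `(1, m-1, 1, m-1, ...)` with `2i` entries. -/
def altL (m : ℕ) : ℕ → List ℕ
  | 0 => []
  | i + 1 => 1 :: (m - 1) :: altL m i

/-- The alternating list `(m-1, 1, m-1, 1, ...)` with `2i` entries. -/
def altL' (m : ℕ) : ℕ → List ℕ
  | 0 => []
  | i + 1 => (m - 1) :: 1 :: altL' m i

/-- The submodule of `OP_k(ℓ,m)` by which we quotient to form the cokernel `C_*` of `φ`: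
the image of `φ` (trivial in degrees `0` and `1`). -/
noncomputable def Phi (R : Type) [CommRing R] (ℓ : ℤ) (m : ℕ) (hm : 2 ≤ m) :
    (k : ℕ) → Submodule R (OPMod R ℓ m k)
  | 0 => ⊥
  | 1 => ⊥
  | (k + 2) => LinearMap.range (phiOP R ℓ m hm k)


lemma Finsupp.map_mem_of_mem_supported {α M R : Type*} [CommRing R] [AddCommGroup M] [Module R M]
    (f : (α →₀ R) →ₗ[R] M) {s : Set α} {p : Submodule R M}
    (hf : ∀ i ∈ s, f (Finsupp.single i 1) ∈ p) {x : α →₀ R}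
    (hx : x ∈ Finsupp.supported R R s) : f x ∈ p := by
  rw [Finsupp.supported_eq_span_single] at hx
  refine (Submodule.span_le (p := p.comap f)).2 ?_ hx
  rintro _ ⟨i, hi, rfl⟩
  exact hf i hi

section ListComplex

variable (R : Type) [CommRing R] (m : ℕ)

noncomputable def consL (a : ℕ) : (List ℕ →₀ R) →ₗ[R] (List ℕ →₀ R) :=
  Finsupp.lmapDomain R R (List.cons a)

@[simp] lemma consL_single (a : ℕ) (l : List ℕ) (r : R) :
    consL R a (Finsupp.single l r) = Finsupp.single (a :: l) r :=
  Finsupp.mapDomain_single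

@[simp] lemma DL_single (l : List ℕ) (r : R) :
    DL R m (Finsupp.single l r) = r • dList R m l := by
  simp [DL]

lemma dList_cons_cons (a b : ℕ) (t : List ℕ) :
    dList R m (a :: b :: t) = (if a + b < m then -Finsupp.single ((a + b) :: t) 1 else 0)
      - consL R a (dList R m (b :: t)) :=
  rfl

noncomputable def mergeHead (a : ℕ) : List ℕ → (List ℕ →₀ R)
  | [] => 0
  | b :: t => if a + b < m then -Finsupp.single ((a + b) :: t) 1 else 0

noncomputable def mergeHeadL (a : ℕ) : (List ℕ →₀ R) →ₗ[R] (List ℕ →₀ R) :=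
  Finsupp.linearCombination R (mergeHead R m a)

@[simp] lemma mergeHeadL_single (a : ℕ) (l : List ℕ) (r : R) :
    mergeHeadL R m a (Finsupp.single l r) = r • mergeHead R m a l :=
  Finsupp.linearCombination_single R r l

lemma DL_consL (a : ℕ) (y : List ℕ →₀ R) :
    DL R m (consL R a y) = mergeHeadL R m a y - consL R a (DL R m y) := by
  suffices DL R m ∘ₗ consL R a = mergeHeadL R m a - consL R a ∘ₗ DL R m from
    LinearMap.congr_fun this y
  refine Finsupp.lhom_ext fun l r => ?_
  cases l with
  | nil => simp [dList, mergeHead]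
  | cons b t =>
    simp only [LinearMap.comp_apply, LinearMap.sub_apply, consL_single, DL_single,
      dList_cons_cons, mergeHeadL_single, mergeHead, smul_sub, map_smul]

lemma mergeHeadL_consL (a b : ℕ) (y : List ℕ →₀ R) :
    mergeHeadL R m a (consL R b y) = if a + b < m then -consL R (a + b) y else 0 := by
  have key : mergeHeadL R m a ∘ₗ consL R b = if a + b < m then -consL R (a + b) else 0 := by
    refine Finsupp.lhom_ext fun l r => ?_
    split_ifs with h <;> simp [mergeHead, h]
  rw [← LinearMap.comp_apply, key]
  split_ifs <;> rfl

lemma mergeHeadL_dList (a b : ℕ) (t : List ℕ) :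
    mergeHeadL R m a (dList R m (b :: t))
      = if a + b < m then -dList R m ((a + b) :: t) else 0 := by
  cases t with
  | nil => simp [dList]
  | cons c t =>
    simp only [dList_cons_cons, map_sub, mergeHeadL_consL, apply_ite (mergeHeadL R m a), map_neg,
      mergeHeadL_single, one_smul, mergeHead, map_zero, Nat.add_assoc]
    split_ifs <;> first | omega | abel

lemma DL_dList : ∀ l : List ℕ, DL R m (dList R m l) = 0
  | [] | [_] => by simp [dList]
  | a :: b :: t => by
    rw [dList_cons_cons, map_sub, DL_consL, mergeHeadL_dList, DL_dList (b :: t)]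
    split_ifs <;> simp

lemma DL_DL (y : List ℕ →₀ R) : DL R m (DL R m y) = 0 := by
  suffices DL R m ∘ₗ DL R m = 0 from LinearMap.congr_fun this y
  exact Finsupp.lhom_ext fun l r => by simp [DL_dList]

lemma dList_one_pred_cons {l : List ℕ} (hl : ∀ x ∈ l, 1 ≤ x) :
    dList R m (1 :: (m - 1) :: l) = consL R 1 (consL R (m - 1) (dList R m l)) := by
  have h1 : ¬1 + (m - 1) < m := by omega
  cases l with
  | nil => simp [h1, dList]
  | cons c t =>
    have h2 : ¬m - 1 + c < m := by have := hl c List.mem_cons_self; omega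
    simp [dList_cons_cons, h1, h2]

noncomputable def sList : List ℕ → (List ℕ →₀ R)
  | [] => 0
  | a :: t => if a = 1 then 0 else -Finsupp.single (1 :: (a - 1) :: t) 1

noncomputable def SL : (List ℕ →₀ R) →ₗ[R] (List ℕ →₀ R) :=
  Finsupp.linearCombination R (sList R)

@[simp] lemma SL_single (l : List ℕ) (r : R) : SL R (Finsupp.single l r) = r • sList R l :=
  Finsupp.linearCombination_single R r l

lemma SL_consL_one (y : List ℕ →₀ R) : SL R (consL R 1 y) = 0 := by
  suffices SL R ∘ₗ consL R 1 = 0 from LinearMap.congr_fun this y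
  exact Finsupp.lhom_ext fun l r => by simp [sList]

lemma SL_consL {a : ℕ} (ha : a ≠ 1) (y : List ℕ →₀ R) :
    SL R (consL R a y) = -consL R 1 (consL R (a - 1) y) := by
  suffices SL R ∘ₗ consL R a = -(consL R 1 ∘ₗ consL R (a - 1)) from
    LinearMap.congr_fun this y
  exact Finsupp.lhom_ext fun l r => by simp [sList, ha]

noncomputable def homotopyDefect : List ℕ → (List ℕ →₀ R)
  | a :: b :: t => if a + b = m then Finsupp.single (1 :: (m - 1) :: t) 1 else 0
  | _ => 0

lemma DL_SL_add_SL_DL_consL_one (y : List ℕ →₀ R) :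
    DL R m (SL R (consL R 1 y)) + SL R (DL R m (consL R 1 y)) = SL R (mergeHeadL R m 1 y) := by
  rw [SL_consL_one, DL_consL, map_sub, SL_consL_one]
  simp

lemma DL_SL_add_SL_DL_consL {a : ℕ} (ha : 2 ≤ a) (ham : a < m) (y : List ℕ →₀ R) :
    DL R m (SL R (consL R a y)) + SL R (DL R m (consL R a y))
      = consL R a y + consL R 1 (mergeHeadL R m (a - 1) y) + SL R (mergeHeadL R m a y) := by
  have h1 : 1 + (a - 1) = a := by omega
  rw [SL_consL R (by omega), map_neg, DL_consL, mergeHeadL_consL, DL_consL, map_sub, DL_consL,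
    map_sub, SL_consL R (by omega), h1, if_pos ham]
  abel

lemma DL_SL_add_SL_DL_single {l : List ℕ} (hl : ∀ x ∈ l, 1 ≤ x ∧ x < m) (hl0 : l ≠ [])
    (hl1 : l ≠ [1]) :
    DL R m (SL R (Finsupp.single l 1)) + SL R (DL R m (Finsupp.single l 1))
      = Finsupp.single l 1 - homotopyDefect R m l := by
  obtain ⟨a, t, rfl⟩ := List.exists_cons_of_ne_nil hl0
  have ha := hl a List.mem_cons_self
  rw [← consL_single]
  obtain rfl | ha2 : a = 1 ∨ 2 ≤ a := by omega
  · obtain ⟨b, t, rfl⟩ := List.exists_cons_of_ne_nil (by simpa using hl1)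
    have hb := hl b (by simp)
    rw [DL_SL_add_SL_DL_consL_one]
    rcases lt_trichotomy (1 + b) m with h | h | h
    · simp [mergeHead, sList, homotopyDefect, h, h.ne, show b ≠ 0 by omega]
    · simp [mergeHead, homotopyDefect, h, show m - 1 = b by omega]
    · omega
  · rw [DL_SL_add_SL_DL_consL R m ha2 ha.2]
    cases t with
    | nil => simp [mergeHead, homotopyDefect]
    | cons b t =>
      have hb := hl b (by simp)
      rcases lt_trichotomy (a + b) m with h | h | h
      · simp [mergeHead, sList, homotopyDefect, h, h.ne, show a + b - 1 = a - 1 + b by omega,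
          show a - 1 + b < m by omega, show a + b ≠ 1 by omega]
      · simp [mergeHead, homotopyDefect, h, show a - 1 + b = m - 1 by omega, show 0 < m by omega,
          sub_eq_add_neg]
      · simp [mergeHead, homotopyDefect, h.ne', show ¬a + b < m by omega,
          show ¬a - 1 + b < m by omega]

end ListComplex

/-- `OPb ℓ m k` is definitionally `{l // IsOPb ℓ m k l}`. -/
def IsOPb (ℓ : ℤ) (m k : ℕ) (l : List ℕ) : Prop :=
  l.length = k ∧ (l.sum : ℤ) = ℓ ∧ ∀ x ∈ l, 1 ≤ x ∧ x < m

lemma isOPb_cons {ℓ : ℤ} {m k a : ℕ} {t : List ℕ} :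
    IsOPb ℓ m (k + 1) (a :: t) ↔ (1 ≤ a ∧ a < m) ∧ IsOPb (ℓ - a) m k t := by
  simp only [IsOPb, List.length_cons, List.sum_cons, Nat.cast_add, List.mem_cons,
    forall_eq_or_imp]
  constructor
  · rintro ⟨h1, h2, h3, h4⟩
    exact ⟨h3, by omega, by omega, h4⟩
  · rintro ⟨h3, h1, h2, h4⟩
    exact ⟨by omega, by omega, h3, h4⟩

lemma IsOPb.one_pred_cons {ℓ : ℤ} {m k a : ℕ} {t : List ℕ} (h : IsOPb ℓ m k (a :: t))
    (ha : a ≠ 1) : IsOPb ℓ m (k + 1) (1 :: (a - 1) :: t) := by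
  obtain ⟨j, rfl⟩ : ∃ j, k = j + 1 := ⟨_, h.1.symm⟩
  obtain ⟨ha', ht⟩ := isOPb_cons.1 h
  refine isOPb_cons.2 ⟨⟨le_rfl, by omega⟩, isOPb_cons.2 ⟨⟨by omega, by omega⟩, ?_⟩⟩
  simpa [Nat.cast_sub ha'.1, sub_sub] using ht

lemma isOPb_one_pred_cons {ℓ : ℤ} {m k : ℕ} (hm : 2 ≤ m) {l : List ℕ} :
    IsOPb ℓ m (k + 2) (1 :: (m - 1) :: l) ↔ IsOPb (ℓ - m) m k l := by
  rw [isOPb_cons, isOPb_cons, Nat.cast_sub (by omega : 1 ≤ m)]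
  simp only [Nat.cast_one, sub_sub, add_sub_cancel, le_refl, true_and]
  exact ⟨fun h => h.2.2, fun h => ⟨by omega, ⟨by omega, by omega⟩, h⟩⟩

lemma subsingleton_OPMod_zero (R : Type) [CommRing R] {ℓ : ℤ} (m : ℕ) (hℓ : ℓ ≠ 0) :
    Subsingleton (OPMod R ℓ m 0) := by
  have : IsEmpty (OPb ℓ m 0) := ⟨fun ⟨l, hlen, hsum, _⟩ => by
    rw [List.length_eq_zero_iff.mp hlen] at hsum
    exact hℓ hsum.symm⟩
  infer_instance

section Supported

variable (R : Type) [CommRing R] (m : ℕ)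

lemma consL_mem_supported {ℓ : ℤ} {k a : ℕ} (ha : 1 ≤ a ∧ a < m) {y : List ℕ →₀ R}
    (hy : y ∈ Finsupp.supported R R {l | IsOPb (ℓ - a) m k l}) :
    consL R a y ∈ Finsupp.supported R R {l | IsOPb ℓ m (k + 1) l} := by
  refine Finsupp.map_mem_of_mem_supported _ (fun t ht => ?_) hy
  rw [consL_single]
  exact Finsupp.single_mem_supported R 1 (isOPb_cons.2 ⟨ha, ht⟩)

lemma dList_mem_supported : ∀ {ℓ : ℤ} {k : ℕ} {l : List ℕ}, IsOPb ℓ m (k + 1) l →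
    dList R m l ∈ Finsupp.supported R R {l' | IsOPb ℓ m k l'}
  | _, _, [], _ | _, _, [_], _ => zero_mem _
  | ℓ, k, a :: b :: t, h => by
    obtain ⟨ha, hbt⟩ := isOPb_cons.1 h
    obtain ⟨j, rfl⟩ : ∃ j, k = j + 1 := ⟨_, hbt.1.symm⟩
    obtain ⟨hb, ht⟩ := isOPb_cons.1 hbt
    rw [dList_cons_cons]
    refine sub_mem ?_ (consL_mem_supported R m ha (dList_mem_supported hbt))
    split_ifs with hab
    · refine neg_mem (Finsupp.single_mem_supported R 1
        (isOPb_cons.2 ⟨⟨by omega, hab⟩, ?_⟩))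
      simpa [sub_sub] using ht
    · exact zero_mem _

lemma DL_mem_supported {ℓ : ℤ} {k : ℕ} {y : List ℕ →₀ R}
    (hy : y ∈ Finsupp.supported R R {l | IsOPb ℓ m (k + 1) l}) :
    DL R m y ∈ Finsupp.supported R R {l | IsOPb ℓ m k l} :=
  Finsupp.map_mem_of_mem_supported _ (fun l hl => by simpa using dList_mem_supported R m hl) hy

lemma sList_mem_supported {ℓ : ℤ} {k : ℕ} {l : List ℕ} (hl : IsOPb ℓ m k l) :
    sList R l ∈ Finsupp.supported R R {l' | IsOPb ℓ m (k + 1) l'} := by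
  cases l with
  | nil => exact zero_mem _
  | cons a t =>
    rw [sList]
    split_ifs with ha
    · exact zero_mem _
    · exact neg_mem (Finsupp.single_mem_supported R 1 (hl.one_pred_cons ha))

lemma SL_mem_supported {ℓ : ℤ} {k : ℕ} {y : List ℕ →₀ R}
    (hy : y ∈ Finsupp.supported R R {l | IsOPb ℓ m k l}) :
    SL R y ∈ Finsupp.supported R R {l | IsOPb ℓ m (k + 1) l} :=
  Finsupp.map_mem_of_mem_supported _ (fun l hl => by simpa using sList_mem_supported R m hl) hy

end Supported

noncomputable def sOP (R : Type) [CommRing R] (ℓ : ℤ) (m k : ℕ) :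
    OPMod R ℓ m k →ₗ[R] OPMod R ℓ m (k + 1) :=
  rL R ℓ m (k + 1) ∘ₗ SL R ∘ₗ eL R ℓ m k

section OPComplex

variable (R : Type) [CommRing R] (ℓ : ℤ) (m k : ℕ)

lemma eL_single (b : OPb ℓ m k) (r : R) :
    eL R ℓ m k (Finsupp.single b r) = Finsupp.single b.1 r :=
  Finsupp.mapDomain_single

lemma rL_single {l : List ℕ} (hl : IsOPb ℓ m k l) (r : R) :
    rL R ℓ m k (Finsupp.single l r) = Finsupp.single ⟨l, hl⟩ r :=
  Finsupp.comapDomain_single _ (⟨l, hl⟩ : OPb ℓ m k) r _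

lemma rL_single_of_not {l : List ℕ} (hl : ¬IsOPb ℓ m k l) (r : R) :
    rL R ℓ m k (Finsupp.single l r) = 0 := by
  ext b
  exact Finsupp.single_eq_of_ne fun h => hl (h ▸ b.2)

lemma rL_eL (x : OPMod R ℓ m k) : rL R ℓ m k (eL R ℓ m k x) = x :=
  Finsupp.comapDomain_mapDomain _ Subtype.val_injective x

lemma eL_injective : Function.Injective (eL R ℓ m k) :=
  Function.LeftInverse.injective (rL_eL R ℓ m k)

lemma eL_rL {y : List ℕ →₀ R} (hy : y ∈ Finsupp.supported R R {l | IsOPb ℓ m k l}) :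
    eL R ℓ m k (rL R ℓ m k y) = y :=
  Finsupp.mapDomain_comapDomain _ Subtype.val_injective y
    fun l hl => ⟨⟨l, (Finsupp.mem_supported R y).1 hy hl⟩, rfl⟩

lemma eL_mem_supported (x : OPMod R ℓ m k) :
    eL R ℓ m k x ∈ Finsupp.supported R R {l | IsOPb ℓ m k l} := by
  refine (Finsupp.mem_supported R _).2 fun l hl => ?_
  obtain ⟨b, -, rfl⟩ := Finset.mem_image.1 (Finsupp.mapDomain_support hl)
  exact b.2

lemma eL_dOP (x : OPMod R ℓ m (k + 1)) :
    eL R ℓ m k (dOP R ℓ m k x) = DL R m (eL R ℓ m (k + 1) x) :=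
  eL_rL R ℓ m k (DL_mem_supported R m (eL_mem_supported R ℓ m (k + 1) x))

lemma eL_sOP (x : OPMod R ℓ m k) : eL R ℓ m (k + 1) (sOP R ℓ m k x) = SL R (eL R ℓ m k x) :=
  eL_rL R ℓ m (k + 1) (SL_mem_supported R m (eL_mem_supported R ℓ m k x))

lemma dOP_single (b : OPb ℓ m (k + 1)) (r : R) :
    dOP R ℓ m k (Finsupp.single b r) = r • rL R ℓ m k (dList R m b.1) := by
  simp [dOP, eL_single]

lemma sOP_single (b : OPb ℓ m k) (r : R) :
    sOP R ℓ m k (Finsupp.single b r) = r • rL R ℓ m (k + 1) (sList R b.1) := by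
  simp [sOP, eL_single]

lemma dOP_dOP (x : OPMod R ℓ m (k + 2)) : dOP R ℓ m k (dOP R ℓ m (k + 1) x) = 0 :=
  eL_injective R ℓ m k (by rw [eL_dOP, eL_dOP, DL_DL, map_zero])

lemma dOP_sOP_add_sOP_dOP_single (hℓ : ℓ ≠ 1) (b : OPb ℓ m (k + 1)) :
    dOP R ℓ m (k + 1) (sOP R ℓ m (k + 1) (Finsupp.single b 1))
      + sOP R ℓ m k (dOP R ℓ m k (Finsupp.single b 1))
      = Finsupp.single b 1 - rL R ℓ m (k + 1) (homotopyDefect R m b.1) := by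
  obtain ⟨hlen, hsum, hval⟩ := b.2
  have hne : b.1 ≠ [] := by rintro h; simp [h] at hlen
  have hne1 : b.1 ≠ [1] := by rintro h; simp [h] at hsum; omega
  rw [← rL_eL R ℓ m (k + 1) (_ + _), map_add, eL_dOP, eL_sOP, eL_sOP, eL_dOP, eL_single,
    DL_SL_add_SL_DL_single R m hval hne hne1, map_sub, ← eL_single, rL_eL]

end OPComplex

section Phi

variable (R : Type) [CommRing R] (ℓ : ℤ) (m k : ℕ) (hm : 2 ≤ m)

lemma phiOP_single (b : OPb (ℓ - m) m k) (r : R) :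
    phiOP R ℓ m hm k (Finsupp.single b r)
      = Finsupp.single ⟨1 :: (m - 1) :: b.1, (isOPb_one_pred_cons hm).2 b.2⟩ r :=
  Finsupp.mapDomain_single

lemma phiOP_injective : Function.Injective (phiOP R ℓ m hm k) :=
  Finsupp.mapDomain_injective fun b b' h => Subtype.ext (by simpa using congrArg Subtype.val h)

lemma rL_consL_one_consL_pred (y : List ℕ →₀ R) :
    rL R ℓ m (k + 2) (consL R 1 (consL R (m - 1) y))
      = phiOP R ℓ m hm k (rL R (ℓ - m) m k y) := by
  suffices rL R ℓ m (k + 2) ∘ₗ consL R 1 ∘ₗ consL R (m - 1)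
      = phiOP R ℓ m hm k ∘ₗ rL R (ℓ - m) m k from LinearMap.congr_fun this y
  refine Finsupp.lhom_ext fun l r => ?_
  by_cases hl : IsOPb (ℓ - m) m k l
  · simp only [LinearMap.comp_apply, consL_single, rL_single _ _ _ _ hl,
      rL_single _ _ _ _ ((isOPb_one_pred_cons hm).2 hl)]
    exact (phiOP_single R ℓ m k hm ⟨l, hl⟩ r).symm
  · simp [rL_single_of_not _ _ _ _ hl, rL_single_of_not _ _ _ _ (mt (isOPb_one_pred_cons hm).1 hl)]

lemma dOP_phiOP (w : OPMod R (ℓ - m) m (k + 1)) :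
    dOP R ℓ m (k + 2) (phiOP R ℓ m hm (k + 1) w)
      = phiOP R ℓ m hm k (dOP R (ℓ - m) m k w) := by
  suffices dOP R ℓ m (k + 2) ∘ₗ phiOP R ℓ m hm (k + 1)
      = phiOP R ℓ m hm k ∘ₗ dOP R (ℓ - m) m k from LinearMap.congr_fun this w
  refine Finsupp.lhom_ext fun b r => ?_
  have hd : dOP R ℓ m (k + 2) (phiOP R ℓ m hm (k + 1) (Finsupp.single b r))
      = r • rL R ℓ m (k + 2) (dList R m (1 :: (m - 1) :: b.1)) := by
    rw [phiOP_single]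
    exact dOP_single R ℓ m (k + 2) _ r
  rw [LinearMap.comp_apply, LinearMap.comp_apply, hd, dOP_single, map_smul,
    dList_one_pred_cons R m fun x hx => (b.2.2.2 x hx).1, rL_consL_one_consL_pred]

lemma sOP_phiOP (w : OPMod R (ℓ - m) m k) : sOP R ℓ m (k + 2) (phiOP R ℓ m hm k w) = 0 := by
  suffices sOP R ℓ m (k + 2) ∘ₗ phiOP R ℓ m hm k = 0 from LinearMap.congr_fun this w
  refine Finsupp.lhom_ext fun b r => ?_
  rw [LinearMap.comp_apply, phiOP_single]
  exact (sOP_single R ℓ m (k + 2) _ r).trans (by simp [sList])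

lemma sOP_eq_zero_of_mem_Phi : ∀ {k : ℕ} {x : OPMod R ℓ m k}, x ∈ Phi R ℓ m hm k →
    sOP R ℓ m k x = 0
  | 0, _, hx | 1, _, hx => by rw [(Submodule.mem_bot R).1 hx, map_zero]
  | _ + 2, _, ⟨w, hw⟩ => hw ▸ sOP_phiOP R ℓ m _ hm w

lemma rL_homotopyDefect_mem_Phi {l : List ℕ} (hl : l.length = k + 1) :
    rL R ℓ m (k + 1) (homotopyDefect R m l) ∈ Phi R ℓ m hm (k + 1) := by
  match k, l, hl with
  | 0, [_], _ => simp [homotopyDefect]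
  | j + 1, a :: b :: t, _ =>
    rw [homotopyDefect]
    split_ifs
    · rw [← consL_single, ← consL_single, rL_consL_one_consL_pred R ℓ m j hm]
      exact LinearMap.mem_range_self _ _
    · simp

lemma dOP_sOP_add_sOP_dOP_sub_mem_Phi (hℓ : ℓ ≠ 1) (x : OPMod R ℓ m (k + 1)) :
    dOP R ℓ m (k + 1) (sOP R ℓ m (k + 1) x) + sOP R ℓ m k (dOP R ℓ m k x) - x
      ∈ Phi R ℓ m hm (k + 1) := by
  let H :=
    dOP R ℓ m (k + 1) ∘ₗ sOP R ℓ m (k + 1) + sOP R ℓ m k ∘ₗ dOP R ℓ m k - LinearMap.id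
  refine Finsupp.map_mem_of_mem_supported H (s := Set.univ) (fun b _ => ?_) (by simp)
  simp only [H, LinearMap.sub_apply, LinearMap.add_apply, LinearMap.comp_apply,
    LinearMap.id_apply, dOP_sOP_add_sOP_dOP_single R ℓ m k hℓ b, sub_sub_cancel_left]
  exact neg_mem (rL_homotopyDefect_mem_Phi R ℓ m k hm b.2.1)

end Phi

section Exactness

variable (R : Type) [CommRing R] {ℓ : ℤ} (m k : ℕ)

lemma sOP_single_eq_zero {b : OPb ℓ m k} {t : List ℕ} (hb : b.1 = 1 :: t) :
    sOP R ℓ m k (Finsupp.single b 1) = 0 := by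
  simp [sOP_single, hb, sList]

lemma exists_sOP_single_eq_neg {b : OPb ℓ m k} {a : ℕ} {t : List ℕ} (hb : b.1 = a :: t)
    (ha : a ≠ 1) : ∃ b' : OPb ℓ m (k + 1), b'.1 = 1 :: (a - 1) :: t ∧
      sOP R ℓ m k (Finsupp.single b 1) = -Finsupp.single b' 1 := by
  have hb' : IsOPb ℓ m (k + 1) (1 :: (a - 1) :: t) :=
    (hb ▸ b.2 : IsOPb ℓ m k (a :: t)).one_pred_cons ha
  refine ⟨⟨_, hb'⟩, rfl, ?_⟩
  simp [sOP_single, hb, sList, ha, rL_single _ _ _ _ hb']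

lemma exists_eq_dOP_one (hm : 2 ≤ m) (hℓ : ℓ ≠ 1) {z : OPMod R ℓ m 1}
    (hz : dOP R ℓ m 0 z = 0) : ∃ u : OPMod R ℓ m 2, z = dOP R ℓ m 1 u := by
  have h := dOP_sOP_add_sOP_dOP_sub_mem_Phi R ℓ m 0 hm hℓ z
  rw [hz, map_zero, add_zero] at h
  exact ⟨sOP R ℓ m 1 z, (sub_eq_zero.1 ((Submodule.mem_bot R).1 h)).symm⟩

variable (hm : 2 ≤ m)

lemma exists_sub_dOP_mem_Phi (hℓ : ℓ ≠ 1) {c : OPMod R ℓ m (k + 1)}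
    (hc : dOP R ℓ m k c ∈ Phi R ℓ m hm k) :
    ∃ c' : OPMod R ℓ m (k + 2), c - dOP R ℓ m (k + 1) c' ∈ Phi R ℓ m hm (k + 1) := by
  refine ⟨sOP R ℓ m (k + 1) c, ?_⟩
  have h := dOP_sOP_add_sOP_dOP_sub_mem_Phi R ℓ m k hm hℓ c
  rw [sOP_eq_zero_of_mem_Phi R ℓ m hm hc, add_zero] at h
  simpa using neg_mem h

lemma exists_phiOP_add_dOP (hℓ : ℓ ≠ 1) {z : OPMod R ℓ m (k + 2)}
    (hz : dOP R ℓ m (k + 1) z = 0) :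
    ∃ (w : OPMod R (ℓ - m) m k) (u : OPMod R ℓ m (k + 3)),
      dOPOut R (ℓ - m) m k w = 0 ∧ z = phiOP R ℓ m hm k w + dOP R ℓ m (k + 2) u := by
  obtain ⟨w, hw⟩ := dOP_sOP_add_sOP_dOP_sub_mem_Phi R ℓ m (k + 1) hm hℓ z
  rw [hz, map_zero, add_zero] at hw
  refine ⟨-w, sOP R ℓ m (k + 2) z, ?_, by rw [map_neg, hw]; abel⟩
  cases k with
  | zero => rfl
  | succ j =>
    refine phiOP_injective R ℓ m j hm ?_
    rw [dOPOut, map_neg, map_neg, ← dOP_phiOP, hw, map_sub, dOP_dOP, hz, sub_zero, neg_zero,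
      map_zero]

lemma exists_eq_dOP_of_phiOP_eq_dOP (hℓ : ℓ ≠ 1) {w : OPMod R (ℓ - m) m k}
    {u : OPMod R ℓ m (k + 3)} (hu : phiOP R ℓ m hm k w = dOP R ℓ m (k + 2) u) :
    ∃ v : OPMod R (ℓ - m) m (k + 1), w = dOP R (ℓ - m) m k v := by
  obtain ⟨v, hv⟩ := dOP_sOP_add_sOP_dOP_sub_mem_Phi R ℓ m (k + 2) hm hℓ u
  rw [← hu, sOP_phiOP, add_zero] at hv
  refine ⟨-v, phiOP_injective R ℓ m k hm ?_⟩
  rw [map_neg, map_neg, ← dOP_phiOP, hv, map_sub, dOP_dOP, ← hu, zero_sub, neg_neg]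

end Exactness

/-- for `m ≥ 2`, `ℓ ≥ 2`, on the quotient `C_* = OP_*(ℓ,m)/im φ` the map
`s(a₁,...,a_k) = 0` if `a₁ = 1` and `-(1, a₁-1, a₂, ..., a_k)` if `a₁ > 1` satisfies
`sd + ds = Id`; hence `C_*` is acyclic and `φ` is a quasi-isomorphism. -/
theorem quotient_contractible (R : Type) [CommRing R] (ℓ : ℤ) (m : ℕ)
    (hm : 2 ≤ m) (hℓ : 2 ≤ ℓ) :
    (∃ s : ∀ k, OPMod R ℓ m k →ₗ[R] OPMod R ℓ m (k + 1),
      -- `s` is given on basis elements by the stated formula (a lift of the map on `C_*`):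
      (∀ k (b : OPb ℓ m (k + 1)) (a : ℕ) (t : List ℕ), b.1 = a :: t →
        (a = 1 → s (k + 1) (Finsupp.single b 1) = 0) ∧
        (1 < a → ∃ b' : OPb ℓ m (k + 2), b'.1 = 1 :: (a - 1) :: t ∧
          s (k + 1) (Finsupp.single b 1) = -Finsupp.single b' 1)) ∧
      -- `s d + d s = Id` holds in the quotient `C_*`, i.e. modulo the image of `φ`:
      (∀ c : OPMod R ℓ m 0, dOP R ℓ m 0 (s 0 c) - c ∈ Phi R ℓ m hm 0) ∧
      (∀ k (c : OPMod R ℓ m (k + 1)),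
        dOP R ℓ m (k + 1) (s (k + 1) c) + s k (dOP R ℓ m k c) - c ∈ Phi R ℓ m hm (k + 1))) ∧
    -- hence `C_*` is acyclic: every relative cycle is a relative boundary:
    (∀ c : OPMod R ℓ m 0, ∃ c' : OPMod R ℓ m 1, c - dOP R ℓ m 0 c' ∈ Phi R ℓ m hm 0) ∧
    (∀ k (c : OPMod R ℓ m (k + 1)), dOP R ℓ m k c ∈ Phi R ℓ m hm k →
      ∃ c' : OPMod R ℓ m (k + 2), c - dOP R ℓ m (k + 1) c' ∈ Phi R ℓ m hm (k + 1)) ∧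
    -- and `φ` is a quasi-isomorphism: it induces a bijection on homology
    -- (surjectivity, injectivity, and vanishing of `H_0` and `H_1` of `OP_*(ℓ,m)`):
    (∀ k (z : OPMod R ℓ m (k + 2)), dOPOut R ℓ m (k + 2) z = 0 →
      ∃ (w : OPMod R (ℓ - m) m k) (u : OPMod R ℓ m (k + 3)),
        dOPOut R (ℓ - m) m k w = 0 ∧ z = phiOP R ℓ m hm k w + dOP R ℓ m (k + 2) u) ∧
    (∀ k (w : OPMod R (ℓ - m) m k), dOPOut R (ℓ - m) m k w = 0 →
      (∃ u : OPMod R ℓ m (k + 3), phiOP R ℓ m hm k w = dOP R ℓ m (k + 2) u) →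
      ∃ v : OPMod R (ℓ - m) m (k + 1), w = dOP R (ℓ - m) m k v) ∧
    (∀ z : OPMod R ℓ m 1, dOPOut R ℓ m 1 z = 0 → ∃ u : OPMod R ℓ m 2, z = dOP R ℓ m 1 u) ∧
    (∀ z : OPMod R ℓ m 0, ∃ u : OPMod R ℓ m 1, z = dOP R ℓ m 0 u) := by
  have hℓ0 : ℓ ≠ 0 := by omega
  have hℓ1 : ℓ ≠ 1 := by omega
  have := subsingleton_OPMod_zero R m hℓ0
  refine ⟨⟨sOP R ℓ m, fun k b a t hb => ⟨?_, ?_⟩, fun _ => ?_,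
      fun k => dOP_sOP_add_sOP_dOP_sub_mem_Phi R ℓ m k hm hℓ1⟩,
    fun _ => ⟨0, ?_⟩, fun k _ => exists_sub_dOP_mem_Phi R m k hm hℓ1,
    fun k _ => exists_phiOP_add_dOP R m k hm hℓ1,
    fun k w _ ⟨u, hu⟩ => exists_eq_dOP_of_phiOP_eq_dOP R m k hm hℓ1 hu,
    fun _ => exists_eq_dOP_one R m hm hℓ1, fun _ => ⟨0, Subsingleton.elim _ _⟩⟩
  · rintro rfl
    exact sOP_single_eq_zero R m (k + 1) hb
  · exact fun ha => exists_sOP_single_eq_neg R m (k + 1) hb ha.ne'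
  all_goals exact (Submodule.mem_bot R).2 (Subsingleton.elim _ _)
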